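/- arXiv:2603.12794 — 3 statements merged into one kernel-verified Lean document; each statement's English description precedes it below -/
import Mathlib

section
/- Let n ≥ 1, λ > 0 and α > 0 be real numbers. The Rational Quadratic kernel K(x, y) = (1 + ‖x − y‖² / λ)^{−α} on ℝⁿ is strictly positive definite: for every natural number N, every family of pairwise distinct points x₁, …, x_N in ℝⁿ, and every nonzero family of real coefficients c₁, …, c_N, one has ∑_{i=1}^{N} ∑_{j=1}^{N} c_i c_j (1 + ‖x_i − x_j‖² / λ)^{−α} > 0. -/
/-!
Since `b ^ (-α) = Γ(α)⁻¹ ∫₀^∞ t ^ (α - 1) e ^ (-b t) dt`, the Rational Quadratic kernel is a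
positive mixture over `t > 0` of the kernels `e ^ (-t) exp (-(t / λ) ‖x - y‖²)`, so it suffices that
Gaussian kernels are strictly positive definite. Rescaling `c i` by `exp (-τ ‖x i‖²)` turns
`exp (-τ ‖x - y‖²)` into `exp (2τ ⟪x, y⟫)`, whose quadratic form expands as
`∑ₖ (2τ)ᵏ / k! ∑_{f : Fin k → κ} (∑ᵢ cᵢ ∏ₘ xᵢ(f m))²`: a sum of squares which vanishes only if all
moments of `c` against the points vanish, and such `c` annihilates every polynomial, hence is `0`.
-/

open Finset MeasureTheory Set Matrix
open scoped Nat

section Moments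

variable {ι κ : Type*} [Fintype ι] (x : ι → κ → ℝ)

def momentKernel : Submodule ℝ (ι → ℝ) :=
  ⨅ (k : ℕ) (f : Fin k → κ), LinearMap.ker (Fintype.linearCombination ℝ fun i ↦ ∏ m, x i (f m))

variable {x} {d : ι → ℝ}

lemma mem_momentKernel :
    d ∈ momentKernel x ↔ ∀ (k : ℕ) (f : Fin k → κ), ∑ i, d i * ∏ m, x i (f m) = 0 := by
  simp [momentKernel, Fintype.linearCombination_apply]

lemma coord_mul_mem_momentKernel (a : κ) (hd : d ∈ momentKernel x) :
    (fun i ↦ x i a * d i) ∈ momentKernel x := by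
  rw [mem_momentKernel] at hd ⊢
  intro k f
  simpa [Fin.prod_univ_succ, mul_assoc, mul_left_comm] using hd (k + 1) (Fin.cons a f)

lemma eval_mul_mem_momentKernel (p : MvPolynomial κ ℝ) (hd : d ∈ momentKernel x) :
    (fun i ↦ MvPolynomial.eval (x i) p * d i) ∈ momentKernel x := by
  induction p using MvPolynomial.induction_on generalizing d with
  | C a =>
    convert (momentKernel x).smul_mem a hd using 1
    ext i; simp
  | add p q hp hq =>
    convert (momentKernel x).add_mem (hp hd) (hq hd) using 1
    ext i; simp [add_mul]
  | mul_X p a hp => simpa [mul_assoc] using hp (coord_mul_mem_momentKernel a hd)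

lemma eq_zero_of_mem_momentKernel [Fintype κ] (hx : Function.Injective x)
    (hd : d ∈ momentKernel x) : d = 0 := by
  classical
  funext i₀
  let p : MvPolynomial κ ℝ :=
    ∏ j ∈ univ.erase i₀, ∑ a, (MvPolynomial.X a - MvPolynomial.C (x j a)) ^ 2
  have eval_p (y : κ → ℝ) :
      MvPolynomial.eval y p = ∏ j ∈ univ.erase i₀, ∑ a, (y a - x j a) ^ 2 := by
    simp [p]
  have eval_p_ne : MvPolynomial.eval (x i₀) p ≠ 0 := by
    rw [eval_p]
    refine prod_ne_zero_iff.2 fun j hj ↦ ?_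
    obtain ⟨a, ha⟩ := Function.ne_iff.1 (hx.ne (ne_of_mem_erase hj).symm)
    exact (sum_pos' (fun a _ ↦ sq_nonneg _) ⟨a, mem_univ a, by
      simpa [sq_pos_iff, sub_eq_zero] using ha⟩).ne'
  have eval_p_eq_zero {i : ι} (hi : i ≠ i₀) : MvPolynomial.eval (x i) p = 0 := by
    rw [eval_p]
    exact prod_eq_zero (mem_erase.2 ⟨hi, mem_univ i⟩) (by simp)
  have h := mem_momentKernel.1 (eval_mul_mem_momentKernel p hd) 0 Fin.elim0
  rw [sum_eq_single i₀ (fun i _ hi ↦ by simp [eval_p_eq_zero hi]) (by simp)] at h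
  simpa [eval_p_ne] using h

end Moments

section ExpDotProduct

variable {ι κ : Type*} [Fintype ι] [Fintype κ] (x : ι → κ → ℝ) (d : ι → ℝ)

lemma sum_mul_dotProduct_pow (k : ℕ) :
    ∑ i, ∑ j, d i * d j * (x i ⬝ᵥ x j) ^ k = ∑ f : Fin k → κ, (∑ i, d i * ∏ m, x i (f m)) ^ 2 := by
  classical
  have pow_eq (i j : ι) : (x i ⬝ᵥ x j) ^ k = ∑ f : Fin k → κ, ∏ m, x i (f m) * x j (f m) := by
    rw [dotProduct, ← Fin.prod_const, Fintype.prod_sum]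
  calc ∑ i, ∑ j, d i * d j * (x i ⬝ᵥ x j) ^ k
      = ∑ i, ∑ f : Fin k → κ, ∑ j, (d i * ∏ m, x i (f m)) * (d j * ∏ m, x j (f m)) := by
        refine sum_congr rfl fun i _ ↦ ?_
        simp_rw [pow_eq, mul_sum]
        rw [sum_comm]
        refine sum_congr rfl fun f _ ↦ sum_congr rfl fun j _ ↦ ?_
        rw [prod_mul_distrib]
        ring
    _ = _ := by
      rw [sum_comm]
      simp_rw [sq, sum_mul_sum]

lemma hasSum_sum_mul_exp_dotProduct (s : ℝ) :
    HasSum (fun k ↦ s ^ k / k ! * ∑ f : Fin k → κ, (∑ i, d i * ∏ m, x i (f m)) ^ 2)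
      (∑ i, ∑ j, d i * d j * Real.exp (s * x i ⬝ᵥ x j)) := by
  have := hasSum_sum (s := univ) fun i _ ↦ hasSum_sum (s := univ) fun j _ ↦
    (NormedSpace.expSeries_div_hasSum_exp (s * x i ⬝ᵥ x j)).mul_left (d i * d j)
  rw [← Real.exp_eq_exp_ℝ] at this
  refine (funext fun k ↦ ?_ : (fun k ↦ _) = _) ▸ this
  rw [← sum_mul_dotProduct_pow, mul_sum]
  refine sum_congr rfl fun i _ ↦ ?_
  rw [mul_sum]
  exact sum_congr rfl fun j _ ↦ by ring

variable {x d}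

theorem sum_mul_exp_dotProduct_pos (hx : Function.Injective x) (hd : d ≠ 0) {s : ℝ} (hs : 0 < s) :
    0 < ∑ i, ∑ j, d i * d j * Real.exp (s * x i ⬝ᵥ x j) := by
  obtain ⟨k, f, hkf⟩ : ∃ (k : ℕ) (f : Fin k → κ), ∑ i, d i * ∏ m, x i (f m) ≠ 0 := by
    by_contra! h
    exact hd (eq_zero_of_mem_momentKernel hx (mem_momentKernel.2 h))
  refine hasSum_lt (f := 0) (i := k) (fun k ↦ by positivity) ?_ hasSum_zero
    (hasSum_sum_mul_exp_dotProduct x d s)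
  exact mul_pos (by positivity) <|
    sum_pos' (fun _ _ ↦ sq_nonneg _) ⟨f, mem_univ f, sq_pos_of_ne_zero hkf⟩

end ExpDotProduct

section Gaussian

variable {ι κ : Type*} [Fintype ι] [Fintype κ]

theorem sum_mul_exp_neg_mul_norm_sub_sq_pos {x : ι → EuclideanSpace ℝ κ}
    (hx : Function.Injective x) {c : ι → ℝ} (hc : c ≠ 0) {τ : ℝ} (hτ : 0 < τ) :
    0 < ∑ i, ∑ j, c i * c j * Real.exp (-(τ * ‖x i - x j‖ ^ 2)) := by
  set d : ι → ℝ := fun i ↦ c i * Real.exp (-(τ * ‖x i‖ ^ 2))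
  have hd : d ≠ 0 := fun h ↦ hc <| funext fun i ↦ by
    simpa [d, Real.exp_ne_zero] using congrFun h i
  have term_eq (i j : ι) : c i * c j * Real.exp (-(τ * ‖x i - x j‖ ^ 2)) =
      d i * d j * Real.exp (2 * τ * (x i).ofLp ⬝ᵥ (x j).ofLp) := by
    have inner_eq : inner ℝ (x i) (x j) = (x i).ofLp ⬝ᵥ (x j).ofLp := by
      simp [PiLp.inner_apply, dotProduct, mul_comm]
    have exponent_eq : -(τ * ‖x i - x j‖ ^ 2) =
        -(τ * ‖x i‖ ^ 2) + -(τ * ‖x j‖ ^ 2) + 2 * τ * (x i).ofLp ⬝ᵥ (x j).ofLp := by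
      rw [norm_sub_sq_real, inner_eq]
      ring
    rw [exponent_eq, Real.exp_add, Real.exp_add]
    ring
  simp_rw [term_eq]
  exact sum_mul_exp_dotProduct_pos ((WithLp.ofLp_injective 2).comp hx) hd (by positivity)

end Gaussian

lemma setIntegral_pos_of_forall_pos {X : Type*} [MeasurableSpace X] {μ : Measure X} {s : Set X}
    {f : X → ℝ} (hs : MeasurableSet s) (hμs : μ s ≠ 0) (hf : IntegrableOn f s μ)
    (hpos : ∀ x ∈ s, 0 < f x) : 0 < ∫ x in s, f x ∂μ := by
  have hsupp : s ⊆ Function.support f := fun x hx ↦ (hpos x hx).ne'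
  rw [setIntegral_pos_iff_support_of_nonneg_ae ((ae_restrict_iff' hs).2 <| .of_forall
    fun x hx ↦ (hpos x hx).le) hf, Set.inter_eq_right.2 hsupp]
  exact pos_iff_ne_zero.2 hμs

lemma sum_mul_setIntegral {ι X : Type*} [Fintype ι] [MeasurableSpace X] {μ : Measure X}
    {s : Set X} (c : ι → ℝ) {g : ι → ι → X → ℝ} (hg : ∀ i j, IntegrableOn (g i j) s μ) :
    ∑ i, ∑ j, c i * c j * ∫ t in s, g i j t ∂μ = ∫ t in s, ∑ i, ∑ j, c i * c j * g i j t ∂μ := by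
  rw [integral_finsetSum _ fun i _ ↦ integrable_finsetSum _ fun j _ ↦ (hg i j).const_mul _]
  refine sum_congr rfl fun i _ ↦ ?_
  rw [integral_finsetSum _ fun j _ ↦ (hg i j).const_mul _]
  exact sum_congr rfl fun j _ ↦ (integral_const_mul _ _).symm

lemma integrableOn_rpow_mul_exp_neg_mul {α b : ℝ} (hα : 0 < α) (hb : 0 < b) :
    IntegrableOn (fun t : ℝ ↦ t ^ (α - 1) * Real.exp (-(b * t))) (Ioi 0) := by
  simpa [Real.rpow_one, neg_mul] using
    integrableOn_rpow_mul_exp_neg_mul_rpow (by linarith : (-1 : ℝ) < α - 1) one_pos hb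

lemma rpow_neg_eq_integral {α b : ℝ} (hα : 0 < α) (hb : 0 < b) :
    b ^ (-α) = (Real.Gamma α)⁻¹ * ∫ t in Ioi 0, t ^ (α - 1) * Real.exp (-(b * t)) := by
  rw [Real.integral_rpow_mul_exp_neg_mul_Ioi hα hb, one_div, Real.inv_rpow hb.le,
    ← Real.rpow_neg hb.le, mul_comm (b ^ (-α)), inv_mul_cancel_left₀ (Real.Gamma_pos_of_pos hα).ne']

theorem sum_mul_rpow_mul_exp_neg_one_add_pos {ι κ : Type*} [Fintype ι] [Fintype κ]
    {x : ι → EuclideanSpace ℝ κ} (hx : Function.Injective x) {c : ι → ℝ} (hc : c ≠ 0)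
    {lam α t : ℝ} (hlam : 0 < lam) (ht : 0 < t) :
    0 < ∑ i, ∑ j, c i * c j * (t ^ (α - 1) * Real.exp (-((1 + ‖x i - x j‖ ^ 2 / lam) * t))) := by
  have split (i j : ι) : c i * c j * (t ^ (α - 1) *
      Real.exp (-((1 + ‖x i - x j‖ ^ 2 / lam) * t))) = t ^ (α - 1) * Real.exp (-t) *
      (c i * c j * Real.exp (-(t / lam * ‖x i - x j‖ ^ 2))) := by
    have exponent_eq : -((1 + ‖x i - x j‖ ^ 2 / lam) * t) =
        -t + -(t / lam * ‖x i - x j‖ ^ 2) := by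
      field_simp
      ring
    rw [exponent_eq, Real.exp_add]
    ring
  simp_rw [split, ← mul_sum]
  exact mul_pos (by positivity) (sum_mul_exp_neg_mul_norm_sub_sq_pos hx hc (by positivity))

theorem rationalQuadratic_strictly_positive_definite_general (n : ℕ)
    (lam α : ℝ) (hlam : 0 < lam) (hα : 0 < α) :
    ∀ (N : ℕ) (x : Fin N → EuclideanSpace ℝ (Fin n)) (c : Fin N → ℝ),
      Function.Injective x → c ≠ 0 →
      0 < ∑ i, ∑ j, c i * c j * (1 + ‖x i - x j‖ ^ 2 / lam) ^ (-α) := by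
  intro N x c hx hc
  have hb (i j : Fin N) : 0 < 1 + ‖x i - x j‖ ^ 2 / lam := by positivity
  have hint (i j : Fin N) := integrableOn_rpow_mul_exp_neg_mul hα (hb i j)
  simp_rw [rpow_neg_eq_integral hα (hb _ _), mul_left_comm _ (Real.Gamma α)⁻¹, ← mul_sum,
    sum_mul_setIntegral c hint]
  exact mul_pos (inv_pos.2 (Real.Gamma_pos_of_pos hα)) <|
    setIntegral_pos_of_forall_pos measurableSet_Ioi (by simp)
      (integrable_finsetSum _ fun i _ ↦ integrable_finsetSum _ fun j _ ↦ (hint i j).const_mul _)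
      fun t ht ↦ sum_mul_rpow_mul_exp_neg_one_add_pos hx hc hlam ht

/-- The Rational Quadratic kernel on ℝⁿ is strictly positive definite. -/
theorem rationalQuadratic_strictly_positive_definite (n : ℕ) (hn : 1 ≤ n)
    (lam α : ℝ) (hlam : 0 < lam) (hα : 0 < α) :
    ∀ (N : ℕ) (x : Fin N → EuclideanSpace ℝ (Fin n)) (c : Fin N → ℝ),
      Function.Injective x → c ≠ 0 →
      0 < ∑ i, ∑ j, c i * c j * (1 + ‖x i - x j‖ ^ 2 / lam) ^ (-α) :=
  rationalQuadratic_strictly_positive_definite_general n lam α hlam hα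
end

section
/- Let X be a type and let N : X → X → ℝ be a symmetric, conditionally negative definite function with N(x, x) = 0 for all x ∈ X and N(x, y) ≥ 0 for all x, y ∈ X. Then for every real t > 0, the kernel K_t(x, y) = exp(−t · N(x, y)) is positive semidefinite: for every finite family of points x₁, …, x_N in X and real coefficients c₁, …, c_N, ∑_{i,j} c_i c_j exp(−t N(x_i, x_j)) ≥ 0. -/
/-!
Fix a base point `x₀` and put `a x = N x x₀`. Conditional negative definiteness, applied to the
points `x₀, x₁, …, x_M` with coefficient `-∑ cᵢ` at `x₀`, says exactly that
`G x y = a x + a y - N x y` is a positive semidefinite kernel. By the Schur product theorem all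
entrywise powers of a positive semidefinite matrix are positive semidefinite, hence so is its
entrywise exponential, a sum of nonnegative multiples of them. Finally
`exp (-t N x y) = exp (-t a x) * exp (t G x y) * exp (-t a y)`, a diagonal congruence of the
entrywise exponential of `t G`.
-/

open Finset

namespace Matrix

variable {ι : Type*} [Fintype ι]

theorem posSemidef_iff_sum_mul_mul_nonneg {A : Matrix ι ι ℝ} :
    A.PosSemidef ↔ A.IsHermitian ∧ ∀ c : ι → ℝ, 0 ≤ ∑ i, ∑ j, c i * c j * A i j := by
  simp only [posSemidef_iff_dotProduct_mulVec, dotProduct, mulVec, star_trivial, mul_sum]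
  refine and_congr_right fun _ => forall_congr' fun c => ?_
  simp only [mul_left_comm, mul_comm]

open scoped ComplexOrder in
theorem PosSemidef.map_pow {𝕜 : Type*} [RCLike 𝕜] {A : Matrix ι ι 𝕜} (hA : A.PosSemidef)
    (n : ℕ) : (A.map (· ^ n)).PosSemidef := by
  induction n with
  | zero => simpa [vecMulVec, Matrix.map] using posSemidef_vecMulVec_self_star (1 : ι → 𝕜)
  | succ n ih =>
    convert ih.hadamard hA using 1
    ext i j
    simp [pow_succ]

theorem PosSemidef.of_hasSum {β : Type*} {f : β → Matrix ι ι ℝ} {A : Matrix ι ι ℝ}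
    (hA : HasSum f A) (hf : ∀ b, (f b).PosSemidef) : A.PosSemidef := by
  have hentry : ∀ i j, HasSum (fun b => f b i j) (A i j) := fun i j =>
    Pi.hasSum.1 (Pi.hasSum.1 hA i) j
  refine posSemidef_iff_sum_mul_mul_nonneg.2 ⟨?_, fun c => ?_⟩
  · refine IsHermitian.ext fun i j => ?_
    have hsymm : ∀ b, f b j i = f b i j := fun b => by simpa using (hf b).isHermitian.apply i j
    simpa only [star_trivial, hsymm] using
      (hentry j i).unique (by simpa only [hsymm] using hentry i j)
  · have hform : HasSum (fun b => ∑ i, ∑ j, c i * c j * f b i j) (∑ i, ∑ j, c i * c j * A i j) :=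
      hasSum_sum fun i _ => hasSum_sum fun j _ => (hentry i j).mul_left _
    exact hform.nonneg fun b => (posSemidef_iff_sum_mul_mul_nonneg.1 (hf b)).2 c

theorem PosSemidef.map_exp {A : Matrix ι ι ℝ} (hA : A.PosSemidef) :
    (A.map Real.exp).PosSemidef := by
  refine .of_hasSum (f := fun n => (n.factorial : ℝ)⁻¹ • A.map (· ^ n)) ?_
    fun n => (hA.map_pow n).smul (by positivity)
  refine Pi.hasSum.2 fun i => Pi.hasSum.2 fun j => ?_
  simpa [Real.exp_eq_exp_ℝ, div_eq_inv_mul] using NormedSpace.expSeries_div_hasSum_exp (A i j)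

theorem PosSemidef.diagonal_mul_mul_diagonal [DecidableEq ι] {A : Matrix ι ι ℝ}
    (hA : A.PosSemidef) (d : ι → ℝ) : (diagonal d * A * diagonal d).PosSemidef := by
  simpa using hA.conjTranspose_mul_mul_same (diagonal d)

end Matrix

def ConditionallyNegativeDefinite {X : Type*} (N : X → X → ℝ) : Prop :=
  ∀ (M : ℕ) (x : Fin M → X) (c : Fin M → ℝ),
    ∑ i, c i = 0 → ∑ i, ∑ j, c i * c j * N (x i) (x j) ≤ 0

theorem ConditionallyNegativeDefinite.posSemidef_centeredAt {X : Type*} {N : X → X → ℝ}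
    (hN : ConditionallyNegativeDefinite N) (hsymm : ∀ x y, N x y = N y x)
    (hdiag : ∀ x, N x x = 0) (x₀ : X) {M : ℕ} (x : Fin M → X) :
    (Matrix.of fun i j => N (x i) x₀ + N (x j) x₀ - N (x i) (x j)).PosSemidef := by
  refine Matrix.posSemidef_iff_sum_mul_mul_nonneg.2 ⟨?_, fun c => ?_⟩
  · refine Matrix.IsHermitian.ext fun i j => ?_
    simp only [Matrix.of_apply, star_trivial, hsymm (x i) (x j)]
    ring
  obtain ⟨s, hs⟩ : ∃ s, s = ∑ i, c i := ⟨_, rfl⟩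
  obtain ⟨T, hT⟩ : ∃ T, T = ∑ i, c i * N (x i) x₀ := ⟨_, rfl⟩
  have h := hN (M + 1) (Fin.cons x₀ x) (Fin.cons (-s) c) (by simp [Fin.sum_univ_succ, hs])
  have hrow : ∀ i, ∑ j, c i * c j * N (x i) x₀ = c i * N (x i) x₀ * s := fun i => by
    rw [hs, mul_sum]; exact sum_congr rfl fun j _ => by ring
  have hcol : ∀ i, ∑ j, c i * c j * N (x j) x₀ = c i * T := fun i => by
    rw [hT, mul_sum]; exact sum_congr rfl fun j _ => by ring
  have hleft : ∑ i, -s * c i * N (x i) x₀ = -(s * T) := by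
    rw [hT, mul_sum, ← sum_neg_distrib]; exact sum_congr rfl fun i _ => by ring
  have hright : ∑ i, c i * -s * N (x i) x₀ = -(s * T) := by
    rw [hT, mul_sum, ← sum_neg_distrib]; exact sum_congr rfl fun i _ => by ring
  simp only [Fin.sum_univ_succ, Fin.cons_zero, Fin.cons_succ, hdiag, hsymm x₀, sum_add_distrib,
    hleft, hright, mul_zero, zero_add] at h
  simp only [Matrix.of_apply, mul_add, mul_sub, sum_add_distrib, sum_sub_distrib, hrow, hcol,
    ← sum_mul, ← hs, ← hT]
  linarith

theorem schoenberg_exp_neg_cnd_psd_general {X : Type*} (N : X → X → ℝ)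
    (hsymm : ∀ x y, N x y = N y x)
    (hcnd : ∀ (M : ℕ) (x : Fin M → X) (c : Fin M → ℝ),
      (∑ i, c i) = 0 → ∑ i, ∑ j, c i * c j * N (x i) (x j) ≤ 0)
    (hdiag : ∀ x, N x x = 0) :
    ∀ t : ℝ, 0 < t →
      ∀ (M : ℕ) (x : Fin M → X) (c : Fin M → ℝ),
        0 ≤ ∑ i, ∑ j, c i * c j * Real.exp (-t * N (x i) (x j)) := by
  intro t ht M x c
  cases M with
  | zero => simp
  | succ M =>
    have hK := ((ConditionallyNegativeDefinite.posSemidef_centeredAt hcnd hsymm hdiag (x 0) x).smul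
      ht.le).map_exp.diagonal_mul_mul_diagonal fun i => Real.exp (-t * N (x i) (x 0))
    refine ((Matrix.posSemidef_iff_sum_mul_mul_nonneg.1 hK).2 c).trans_eq ?_
    refine sum_congr rfl fun i _ => sum_congr rfl fun j _ => ?_
    simp only [Matrix.diagonal_mul, Matrix.mul_diagonal, Matrix.map_apply, Matrix.smul_apply,
      Matrix.of_apply, smul_eq_mul]
    rw [← Real.exp_add, ← Real.exp_add]
    congr 2
    ring

/-- Schoenberg's theorem (one direction): if N is symmetric, conditionally negative
definite, vanishes on the diagonal, and is nonnegative, then exp(−t·N) is a positive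
semidefinite kernel for every t > 0. -/
theorem schoenberg_exp_neg_cnd_psd {X : Type*} (N : X → X → ℝ)
    (hsymm : ∀ x y, N x y = N y x)
    (hcnd : ∀ (M : ℕ) (x : Fin M → X) (c : Fin M → ℝ),
      (∑ i, c i) = 0 → ∑ i, ∑ j, c i * c j * N (x i) (x j) ≤ 0)
    (hdiag : ∀ x, N x x = 0)
    (hnonneg : ∀ x y, 0 ≤ N x y) :
    ∀ t : ℝ, 0 < t →
      ∀ (M : ℕ) (x : Fin M → X) (c : Fin M → ℝ),
        0 ≤ ∑ i, ∑ j, c i * c j * Real.exp (-t * N (x i) (x j)) :=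
  schoenberg_exp_neg_cnd_psd_general N hsymm hcnd hdiag
end

section
/- Let n ≥ 1, let s > 0, λ > 0 and η > 0 be real numbers. Define ω : ℝⁿ → ℝ by ω(x) = exp(−η ‖x‖²) and φ : ℝⁿ → ℝⁿ by applying arcsinh componentwise, φ(x)_k = arcsinh(x_k). Then the concrete Amnesia-Weighted Fox Kernel K(x, y) = exp(−η ‖x‖²) · exp(−η ‖y‖²) · (1 + ‖φ(x) − φ(y)‖² / λ)^{−(1+s)} is a valid Mercer kernel: it is symmetric, and for every finite family of points x₁, …, x_N in ℝⁿ and real coefficients c₁, …, c_N, ∑_{i,j} c_i c_j K(x_i, x_j) ≥ 0. -/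
/-!
The inverse multiquadric is a Gamma mixture of Gaussians,
`(1 + d² / λ) ^ (-α) = Γ(α)⁻¹ ∫₀^∞ t ^ (α - 1) e^(-t) e^(-(t / λ) d²) dt`,
and a mixture with nonnegative weights of positive semidefinite kernels is positive
semidefinite. The Gaussian factors as
`e^(-a‖x - y‖²) = e^(-a‖x‖²) e^(-a‖y‖²) e^(2a⟪x, y⟫)`, and `e^(2a⟪x, y⟫)` is a
convergent series of nonnegative multiples of Schur powers of the Gram kernel. Positive
semidefiniteness survives pulling back along any map (here the arcsinh deformation) and
multiplying by `w x * w y` for any weight `w` (here the amnesia weight).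
-/

/-- Componentwise arcsinh deformation map on ℝⁿ. -/
noncomputable def arsinhMap {n : ℕ} (x : EuclideanSpace ℝ (Fin n)) :
    EuclideanSpace ℝ (Fin n) :=
  WithLp.toLp 2 (fun k => Real.arsinh (x k))

/-- The concrete Amnesia-Weighted Fox Kernel with amnesia weight ω(x) = exp(−η‖x‖²) and
componentwise arcsinh deformation. -/
noncomputable def concreteAWFK {n : ℕ} (s lam η : ℝ)
    (x y : EuclideanSpace ℝ (Fin n)) : ℝ :=
  Real.exp (-η * ‖x‖ ^ 2) * Real.exp (-η * ‖y‖ ^ 2) *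
    (1 + ‖arsinhMap x - arsinhMap y‖ ^ 2 / lam) ^ (-(1 + s))

open Finset Matrix MeasureTheory Set Real
open scoped InnerProductSpace

def IsMercerKernel {X : Type*} (K : X → X → ℝ) : Prop :=
  (∀ x y, K x y = K y x) ∧
    ∀ (N : ℕ) (x : Fin N → X) (c : Fin N → ℝ),
      0 ≤ ∑ i, ∑ j, c i * c j * K (x i) (x j)

theorem star_dotProduct_of_mulVec {X : Type*} {N : ℕ} (K : X → X → ℝ) (x : Fin N → X)
    (c : Fin N → ℝ) :
    star c ⬝ᵥ (Matrix.of (fun i j => K (x i) (x j)) *ᵥ c) =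
      ∑ i, ∑ j, c i * c j * K (x i) (x j) := by
  simp only [dotProduct, Matrix.mulVec, Matrix.of_apply, star_trivial, Finset.mul_sum]
  exact Finset.sum_congr rfl fun i _ => Finset.sum_congr rfl fun j _ => by ring

theorem isMercerKernel_iff_posSemidef {X : Type*} {K : X → X → ℝ} :
    IsMercerKernel K ↔
      ∀ (N : ℕ) (x : Fin N → X), (Matrix.of fun i j => K (x i) (x j)).PosSemidef := by
  simp only [posSemidef_iff_dotProduct_mulVec, star_dotProduct_of_mulVec]
  refine ⟨fun hK N x => ⟨?_, hK.2 N x⟩,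
    fun hK => ⟨fun x y => ?_, fun N x => (hK N x).2⟩⟩
  · ext i j
    exact hK.1 (x j) (x i)
  · simpa using ((hK 2 ![x, y]).1.apply 0 1).symm

theorem isMercerKernel_one {X : Type*} : IsMercerKernel fun _ _ : X => (1 : ℝ) := by
  refine ⟨fun _ _ => rfl, fun N x c => ?_⟩
  simpa only [mul_one, ← Finset.sum_mul_sum, ← sq] using sq_nonneg (∑ i, c i)

namespace IsMercerKernel

variable {X Y : Type*} {K L : X → X → ℝ}

theorem mul (hK : IsMercerKernel K) (hL : IsMercerKernel L) :
    IsMercerKernel fun x y => K x y * L x y :=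
  isMercerKernel_iff_posSemidef.2 fun N x =>
    (isMercerKernel_iff_posSemidef.1 hK N x).hadamard (isMercerKernel_iff_posSemidef.1 hL N x)

theorem pow (hK : IsMercerKernel K) (m : ℕ) : IsMercerKernel fun x y => K x y ^ m := by
  induction m with
  | zero => simpa only [pow_zero] using isMercerKernel_one
  | succ m ih => simpa only [pow_succ] using ih.mul hK

theorem const_mul (hK : IsMercerKernel K) {a : ℝ} (ha : 0 ≤ a) :
    IsMercerKernel fun x y => a * K x y := by
  refine ⟨fun x y => by simp only [hK.1 x y], fun N x c => ?_⟩
  have h : ∑ i, ∑ j, c i * c j * (a * K (x i) (x j)) =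
      a * ∑ i, ∑ j, c i * c j * K (x i) (x j) := by
    simp only [Finset.mul_sum]
    exact Finset.sum_congr rfl fun i _ => Finset.sum_congr rfl fun j _ => by ring
  rw [h]
  exact mul_nonneg ha (hK.2 N x c)

theorem comp (hK : IsMercerKernel K) (f : Y → X) : IsMercerKernel fun x y => K (f x) (f y) :=
  ⟨fun _ _ => hK.1 _ _, fun N x c => hK.2 N (f ∘ x) c⟩

theorem mul_weight (hK : IsMercerKernel K) (w : X → ℝ) :
    IsMercerKernel fun x y => w x * w y * K x y := by
  refine ⟨fun x y => by simp only [hK.1 x y, mul_comm (w x)], fun N x c => ?_⟩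
  convert hK.2 N x (fun i => c i * w (x i)) using 3 with i - j -
  ring

theorem of_hasSum {ι : Type*} {Ks : ι → X → X → ℝ} (hKs : ∀ n, IsMercerKernel (Ks n))
    (hsum : ∀ x y, HasSum (fun n => Ks n x y) (K x y)) : IsMercerKernel K := by
  refine ⟨fun x y => (hsum x y).unique ?_, fun N x c => ?_⟩
  · simpa only [(hKs _).1 y x] using hsum y x
  · have h : HasSum (fun n => ∑ i, ∑ j, c i * c j * Ks n (x i) (x j))
        (∑ i, ∑ j, c i * c j * K (x i) (x j)) :=
      hasSum_sum fun i _ => hasSum_sum fun j _ => (hsum (x i) (x j)).mul_left (c i * c j)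
    exact h.nonneg fun n => (hKs n).2 N x c

theorem exp (hK : IsMercerKernel K) : IsMercerKernel fun x y => Real.exp (K x y) := by
  refine of_hasSum (fun n => (hK.pow n).const_mul (by positivity : 0 ≤ (n.factorial : ℝ)⁻¹))
    fun x y => ?_
  simpa only [Real.exp_eq_exp_ℝ, div_eq_inv_mul] using
    NormedSpace.expSeries_div_hasSum_exp (K x y)

theorem integral {Ω : Type*} [MeasurableSpace Ω] {μ : Measure Ω} {Ks : Ω → X → X → ℝ}
    (hKs : ∀ᵐ t ∂μ, IsMercerKernel (Ks t))
    (hint : ∀ x y, Integrable (fun t => Ks t x y) μ) :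
    IsMercerKernel fun x y => ∫ t, Ks t x y ∂μ := by
  refine ⟨fun x y => integral_congr_ae ?_, fun N x c => ?_⟩
  · filter_upwards [hKs] with t ht using ht.1 x y
  · have hint' : ∀ i j, Integrable (fun t => c i * c j * Ks t (x i) (x j)) μ :=
      fun i j => (hint _ _).const_mul _
    have h : ∑ i, ∑ j, c i * c j * ∫ t, Ks t (x i) (x j) ∂μ =
        ∫ t, ∑ i, ∑ j, c i * c j * Ks t (x i) (x j) ∂μ := by
      rw [integral_finsetSum _ fun i _ => integrable_finsetSum _ fun j _ => hint' i j]
      refine sum_congr rfl fun i _ => ?_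
      rw [integral_finsetSum _ fun j _ => hint' i j]
      simp only [integral_const_mul]
    rw [h]
    exact integral_nonneg_of_ae (by filter_upwards [hKs] with t ht using ht.2 N x c)

end IsMercerKernel

section InnerProductSpace

variable {E : Type*} [SeminormedAddCommGroup E] [InnerProductSpace ℝ E]

theorem isMercerKernel_inner : IsMercerKernel fun x y : E => ⟪x, y⟫_ℝ :=
  isMercerKernel_iff_posSemidef.2 fun _ x => posSemidef_gram ℝ x

theorem isMercerKernel_gaussian {a : ℝ} (ha : 0 ≤ a) :
    IsMercerKernel fun x y : E => Real.exp (-(a * ‖x - y‖ ^ 2)) := by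
  have h := ((isMercerKernel_inner (E := E)).const_mul (by positivity : 0 ≤ 2 * a)).exp
    |>.mul_weight fun x => Real.exp (-(a * ‖x‖ ^ 2))
  convert h using 1
  funext x y
  rw [← Real.exp_add, ← Real.exp_add, norm_sub_sq_real]
  ring_nf

theorem rpow_neg_eq_integral_Ioi {α r : ℝ} (hα : 0 < α) (hr : 0 < r) :
    r ^ (-α) = ∫ t in Ioi 0, (Gamma α)⁻¹ * (t ^ (α - 1) * Real.exp (-(r * t))) := by
  rw [integral_const_mul, integral_rpow_mul_exp_neg_mul_Ioi hα hr, one_div,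
    Real.inv_rpow hr.le, ← Real.rpow_neg hr.le]
  field_simp [(Gamma_pos_of_pos hα).ne']

theorem integrableOn_rpow_mul_exp_neg_mul_Ioi {α r : ℝ} (hα : 0 < α) (hr : 0 < r) :
    IntegrableOn (fun t => t ^ (α - 1) * Real.exp (-(r * t))) (Ioi 0) := by
  simpa only [Real.rpow_one, neg_mul] using
    integrableOn_rpow_mul_exp_neg_mul_rpow (by linarith : -1 < α - 1) one_pos hr

theorem isMercerKernel_inverseMultiquadric {α lam : ℝ} (hα : 0 < α) (hlam : 0 < lam) :
    IsMercerKernel fun x y : E => (1 + ‖x - y‖ ^ 2 / lam) ^ (-α) := by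
  set Ks : ℝ → E → E → ℝ := fun t x y =>
    (Gamma α)⁻¹ * (t ^ (α - 1) * Real.exp (-t)) * Real.exp (-(t / lam * ‖x - y‖ ^ 2))
  have hKs_eq : ∀ t x y, Ks t x y =
      (Gamma α)⁻¹ * (t ^ (α - 1) * Real.exp (-((1 + ‖x - y‖ ^ 2 / lam) * t))) := by
    intro t x y
    simp only [Ks, mul_assoc, ← Real.exp_add]
    congr 3
    ring
  have hr : ∀ x y : E, 0 < 1 + ‖x - y‖ ^ 2 / lam := fun x y => by positivity
  have hK : IsMercerKernel fun x y => ∫ t in Ioi 0, Ks t x y := by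
    refine IsMercerKernel.integral ?_ fun x y => ?_
    · filter_upwards [ae_restrict_mem measurableSet_Ioi] with t ht
      have ht : 0 < t := ht
      exact (isMercerKernel_gaussian (by positivity)).const_mul
        (mul_nonneg (inv_nonneg.2 (Gamma_pos_of_pos hα).le) (by positivity))
    · simp only [hKs_eq]
      exact (integrableOn_rpow_mul_exp_neg_mul_Ioi hα (hr x y)).const_mul _
  convert hK using 1
  funext x y
  simp only [hKs_eq, rpow_neg_eq_integral_Ioi hα (hr x y)]

end InnerProductSpace

theorem concreteAWFK_is_mercer_kernel_general (n : ℕ) (s lam η : ℝ)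
    (hs : 0 < s) (hlam : 0 < lam) :
    (∀ x y : EuclideanSpace ℝ (Fin n),
      concreteAWFK s lam η x y = concreteAWFK s lam η y x) ∧
    (∀ (N : ℕ) (x : Fin N → EuclideanSpace ℝ (Fin n)) (c : Fin N → ℝ),
      0 ≤ ∑ i, ∑ j, c i * c j * concreteAWFK s lam η (x i) (x j)) := by
  have hK : IsMercerKernel (concreteAWFK (n := n) s lam η) :=
    ((isMercerKernel_inverseMultiquadric (by linarith) hlam).comp arsinhMap).mul_weight
      fun x => Real.exp (-η * ‖x‖ ^ 2)
  exact hK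

/-- The concrete Amnesia-Weighted Fox Kernel is a valid Mercer kernel: symmetric and
positive semidefinite. -/
theorem concreteAWFK_is_mercer_kernel (n : ℕ) (hn : 1 ≤ n) (s lam η : ℝ)
    (hs : 0 < s) (hlam : 0 < lam) (hη : 0 < η) :
    (∀ x y : EuclideanSpace ℝ (Fin n),
      concreteAWFK s lam η x y = concreteAWFK s lam η y x) ∧
    (∀ (N : ℕ) (x : Fin N → EuclideanSpace ℝ (Fin n)) (c : Fin N → ℝ),
      0 ≤ ∑ i, ∑ j, c i * c j * concreteAWFK s lam η (x i) (x j)) :=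
  concreteAWFK_is_mercer_kernel_general n s lam η hs hlam
end
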